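/- Let n, m ≥ 1 be integers and let A : {0,...,n−1} × {0,...,m−1} → {0,1} be any n × m binary array. Let A* be the n × m binary array whose (i,j) entry is the minimum of A over the closed grid neighbourhood of (i,j), i.e., over (i,j) together with those of (i−1,j), (i+1,j), (i,j−1), (i,j+1) that lie within the array. Then the set S = {(i,j) : A*(i,j) = 1} is a digitally convex set of P_n □ P_m. -/
import Mathlib


open SimpleGraph Classical

/-- `N[S]`: the union of closed neighbourhoods of the vertices of `S`. -/
def closedNbhd {V : Type*} (G : SimpleGraph V) (S : Set V) : Set V :=
  ⋃ v ∈ S, insert v (G.neighborSet v)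

/-- A set `S` is digitally convex in `G` if every vertex `v` with `N[v] ⊆ N[S]`
belongs to `S`. -/
def DigConvex {V : Type*} (G : SimpleGraph V) (S : Set V) : Prop :=
  ∀ v : V, insert v (G.neighborSet v) ⊆ closedNbhd G S → v ∈ S

/-- `n_D(G)`: the number of digitally convex sets of `G`. -/
noncomputable def nD {V : Type*} (G : SimpleGraph V) : ℕ :=
  Nat.card {S : Set V // DigConvex G S}

/-- The path graph `P_n` on vertices `{0, 1, …, n-1}`, with `i` adjacent to `i+1`. -/
def pathG (n : ℕ) : SimpleGraph (Fin n) :=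
  SimpleGraph.fromRel (fun i j => (i : ℕ) + 1 = (j : ℕ))

/-- The array `A*` obtained from the binary array `A` by taking, at each position,
the minimum of `A` over the closed grid neighbourhood of that position (which is
exactly the closed neighbourhood in `P_n □ P_m`): the entry is `1` iff `A` is `1`
on the whole closed neighbourhood. -/
noncomputable def arrStar (n m : ℕ) (A : Fin n × Fin m → Fin 2) : Fin n × Fin m → Fin 2 :=
  fun p => if A p = 1 ∧ ∀ q, (pathG n □ pathG m).Adj p q → A q = 1 then 1 else 0

/-- For any `n × m` binary array `A`, the set `{(i,j) : A*(i,j) = 1}` is a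
digitally convex set of `P_n □ P_m`. -/
theorem arrStar_digConvex (n m : ℕ) (hn : 1 ≤ n) (hm : 1 ≤ m)
    (A : Fin n × Fin m → Fin 2) :
    DigConvex (pathG n □ pathG m) {p : Fin n × Fin m | arrStar n m A p = 1} := by
  intro v hv
  have key : ∀ q ∈ insert v ((pathG n □ pathG m).neighborSet v), A q = 1 := by
    intro q hq
    obtain ⟨s, hs, hqs⟩ := Set.mem_iUnion₂.mp (hv hq)
    have hs' : arrStar n m A s = 1 := hs
    rw [arrStar] at hs'
    split at hs'
    case isTrue hcond =>
      rcases hqs with rfl | hadj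
      · exact hcond.1
      · exact hcond.2 q hadj
    case isFalse => exact absurd hs' (by decide)
  show arrStar n m A v = 1
  rw [arrStar, if_pos]
  exact ⟨key v (Set.mem_insert _ _), fun q hq => key q (Set.mem_insert_of_mem _ hq)⟩
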